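/- If d is a conditionally negative definite pseudometric on D (symmetric, vanishing on the diagonal), then for any κ > 0 and ν ∈ (0, 1], the powered exponential kernel exp(−κ d(s, t)^ν) is positive semidefinite on D. -/

import Mathlib

/-!
Schoenberg: if `N` is symmetric, conditionally negative definite and zero on the diagonal, then
for any base index `i₀` the matrix `N i i₀ + N i₀ j - N i j` is positive semidefinite (test the
CND condition on `x - (∑ x) • e_{i₀}`). By the Schur product theorem and the exponential series its
entrywise exponential is positive semidefinite, and multiplying by `e^{-N i i₀} e^{-N j i₀}`
gives `e^{-N}`.

For `0 < ν < 1` the substitution `u ↦ u x` gives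
`x ^ ν * ∫₀^∞ (1 - e^{-u}) u^{-1-ν} du = ∫₀^∞ (1 - e^{-u x}) u^{-1-ν} du`, so `N ^ ν` is a
positive mixture of the matrices `1 - e^{-u N}`. On vectors summing to zero the constant part
vanishes and `e^{-u N}` is positive semidefinite, so `N ^ ν` is again conditionally negative
definite, and Schoenberg applies to `κ N ^ ν`.
-/

open Real Finset Matrix MeasureTheory Set

lemma integrableOn_one_sub_exp_neg_mul_mul_rpow {ν x : ℝ} (hν0 : 0 < ν) (hν1 : ν < 1)
    (hx : 0 ≤ x) :
    IntegrableOn (fun u => (1 - rexp (-(u * x))) * u ^ (-1 - ν)) (Ioi 0) := by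
  have hcont : ContinuousOn (fun u => (1 - rexp (-(u * x))) * u ^ (-1 - ν)) (Ioi 0) :=
    (by fun_prop : Continuous fun u => 1 - rexp (-(u * x))).continuousOn.mul
      fun u hu => (continuousAt_rpow_const u _ (.inl (ne_of_gt hu))).continuousWithinAt
  have hbound : ∀ u ∈ Ioi (0 : ℝ),
      0 ≤ 1 - rexp (-(u * x)) ∧ 1 - rexp (-(u * x)) ≤ min 1 (u * x) := fun u (hu : 0 < u) => by
    have := add_one_le_exp (-(u * x))
    have := exp_le_one_iff.mpr (neg_nonpos.mpr (mul_nonneg hu.le hx))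
    exact ⟨by linarith, le_min (by linarith [exp_pos (-(u * x))]) (by linarith)⟩
  rw [← Ioc_union_Ioi_eq_Ioi zero_le_one]
  refine IntegrableOn.union ?_ ?_
  · refine Integrable.mono' ((intervalIntegral.intervalIntegrable_rpow' (a := 0) (b := 1) (r := -ν)
      (by linarith)).1.const_mul x)
      ((hcont.mono Ioc_subset_Ioi_self).aestronglyMeasurable measurableSet_Ioc) ?_
    filter_upwards [ae_restrict_mem measurableSet_Ioc] with u hu
    obtain ⟨h0, h1⟩ := hbound u hu.1
    have hu : 0 < u := hu.1
    rw [norm_of_nonneg (mul_nonneg h0 (rpow_nonneg hu.le _))]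
    calc (1 - rexp (-(u * x))) * u ^ (-1 - ν) ≤ u * x * u ^ (-1 - ν) := by
          gcongr; exact h1.trans (min_le_right _ _)
      _ = x * u ^ (-ν) := by
          rw [mul_comm u x, mul_assoc, ← rpow_one_add' hu.le (by linarith)]; ring_nf
  · refine Integrable.mono' (integrableOn_Ioi_rpow_of_lt (a := -1 - ν) (by linarith) zero_lt_one)
      ((hcont.mono fun u (hu : 1 < u) => zero_lt_one.trans hu).aestronglyMeasurable
        measurableSet_Ioi) ?_
    filter_upwards [ae_restrict_mem measurableSet_Ioi] with u hu
    have hu0 : 0 < u := zero_lt_one.trans hu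
    obtain ⟨h0, h1⟩ := hbound u hu0
    rw [norm_of_nonneg (mul_nonneg h0 (rpow_nonneg hu0.le _))]
    calc (1 - rexp (-(u * x))) * u ^ (-1 - ν) ≤ 1 * u ^ (-1 - ν) := by
          gcongr; exact h1.trans (min_le_left _ _)
      _ = u ^ (-1 - ν) := one_mul _

lemma integral_one_sub_exp_neg_mul_rpow_pos {ν : ℝ} (hν0 : 0 < ν) (hν1 : ν < 1) :
    0 < ∫ u in Ioi 0, (1 - rexp (-u)) * u ^ (-1 - ν) := by
  have hint := integrableOn_one_sub_exp_neg_mul_mul_rpow hν0 hν1 zero_le_one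
  simp only [mul_one] at hint
  have hpos : ∀ u ∈ Ioi (0 : ℝ), 0 < (1 - rexp (-u)) * u ^ (-1 - ν) := fun u (hu : 0 < u) =>
    mul_pos (sub_pos.mpr (exp_lt_one_iff.mpr (neg_lt_zero.mpr hu))) (rpow_pos_of_pos hu _)
  rw [setIntegral_pos_iff_support_of_nonneg_ae
    (ae_restrict_of_forall_mem measurableSet_Ioi fun u hu => (hpos u hu).le) hint,
    inter_eq_right.mpr fun u hu => Function.mem_support.mpr (hpos u hu).ne']
  simp

lemma integral_one_sub_exp_neg_mul_mul_rpow {ν x : ℝ} (hν0 : 0 < ν) (hx : 0 ≤ x) :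
    ∫ u in Ioi 0, (1 - rexp (-(u * x))) * u ^ (-1 - ν) =
      x ^ ν * ∫ u in Ioi 0, (1 - rexp (-u)) * u ^ (-1 - ν) := by
  rcases hx.eq_or_lt with rfl | hx
  · simp [zero_rpow hν0.ne']
  have hrescale : ∀ u ∈ Ioi (0 : ℝ), (1 - rexp (-(u * x))) * u ^ (-1 - ν) =
      x ^ (1 + ν) * ((1 - rexp (-(u * x))) * (u * x) ^ (-1 - ν)) := fun u (hu : 0 < u) => by
    rw [mul_rpow hu.le hx.le, mul_left_comm, mul_left_comm (x ^ (1 + ν)), ← rpow_add hx]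
    simp
  rw [setIntegral_congr_fun measurableSet_Ioi hrescale, integral_const_mul,
    integral_comp_mul_right_Ioi (fun u => (1 - rexp (-u)) * u ^ (-1 - ν)) 0 hx, zero_mul,
    smul_eq_mul, ← mul_assoc, ← rpow_neg_one, ← rpow_add hx]
  ring_nf

namespace Matrix

variable {ι : Type*} [Fintype ι]

def CondNegDef (N : Matrix ι ι ℝ) : Prop :=
  ∀ b : ι → ℝ, ∑ i, b i = 0 → b ⬝ᵥ N *ᵥ b ≤ 0

lemma dotProduct_mulVec_self_eq_sum_sum (M : Matrix ι ι ℝ) (x : ι → ℝ) :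
    x ⬝ᵥ M *ᵥ x = ∑ i, ∑ j, x i * x j * M i j := by
  simp only [dotProduct, mulVec, Finset.mul_sum]
  exact sum_congr rfl fun i _ => sum_congr rfl fun j _ => by ring

lemma PosSemidef.map_pow {A : Matrix ι ι ℝ} (hA : A.PosSemidef) :
    ∀ n : ℕ, (A.map (· ^ n)).PosSemidef
  | 0 => by
    simpa [vecMulVec, Matrix.map] using posSemidef_vecMulVec_self_star (fun _ : ι => (1 : ℝ))
  | n + 1 => by
    have hsucc : A.map (· ^ (n + 1)) = A.map (· ^ n) ⊙ A := by
      ext i j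
      simp [pow_succ]
    rw [hsucc]
    exact (hA.map_pow n).hadamard hA

lemma PosSemidef.map_exp {A : Matrix ι ι ℝ} (hA : A.PosSemidef) : (A.map rexp).PosSemidef := by
  refine .of_dotProduct_mulVec_nonneg (hA.isHermitian.map _ fun _ => rfl) fun x => ?_
  have hseries : HasSum (fun n : ℕ => (x ⬝ᵥ A.map (· ^ n) *ᵥ x) / n.factorial)
      (x ⬝ᵥ A.map rexp *ᵥ x) := by
    simp only [dotProduct_mulVec_self_eq_sum_sum, sum_div, map_apply, mul_div_assoc]
    refine hasSum_sum fun i _ => hasSum_sum fun j _ => .mul_left _ ?_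
    rw [exp_eq_exp_ℝ]
    exact NormedSpace.expSeries_div_hasSum_exp _
  rw [star_trivial]
  exact hseries.nonneg fun n =>
    div_nonneg ((hA.map_pow n).dotProduct_mulVec_nonneg x) (by positivity)

lemma CondNegDef.smul {N : Matrix ι ι ℝ} (hN : N.CondNegDef) {t : ℝ} (ht : 0 ≤ t) :
    (t • N).CondNegDef := fun b hb => by
  rw [smul_mulVec, dotProduct_smul, smul_eq_mul]
  exact mul_nonpos_of_nonneg_of_nonpos ht (hN b hb)

lemma CondNegDef.posSemidef_of_basepoint {N : Matrix ι ι ℝ} (hN : N.CondNegDef) (hsymm : N.IsSymm)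
    (i₀ : ι) : (of fun i j => N i i₀ + N i₀ j - N i j - N i₀ i₀).PosSemidef := by
  classical
  refine .of_dotProduct_mulVec_nonneg ?_ fun x => ?_
  · rw [isHermitian_iff_isSymm]
    ext i j
    simp only [transpose_apply, of_apply, hsymm.apply]
    ring
  set S := ∑ i, x i
  have hb := hN (x - S • Pi.single i₀ 1) (by simp [sum_sub_distrib, Pi.single_apply, S])
  have e₁ : ∑ i, ∑ j, x i * x j * N i i₀ = ∑ i, x i * S * N i i₀ :=
    sum_congr rfl fun i _ => by rw [← sum_mul, ← mul_sum]
  have e₂ : ∑ i, ∑ j, x i * x j * N i₀ j = ∑ j, S * x j * N i₀ j := by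
    rw [sum_comm]
    exact sum_congr rfl fun j _ => by rw [← sum_mul, ← sum_mul]
  have e₃ : ∑ i, ∑ j, x i * x j * N i₀ i₀ = S * S * N i₀ i₀ := by
    simp only [← sum_mul, ← mul_sum, S]
  simp only [star_trivial, dotProduct_mulVec_self_eq_sum_sum] at hb ⊢
  simp only [Pi.sub_apply, Pi.smul_apply, Pi.single_apply, smul_eq_mul, mul_ite, mul_one,
    mul_zero, mul_sub, sub_mul, ite_mul, zero_mul, sum_sub_distrib, sum_ite_irrel, sum_const_zero,
    sum_ite_eq', Finset.mem_univ, ↓reduceIte, tsub_le_iff_right, zero_add] at hb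
  simp only [of_apply, mul_add, mul_sub, sum_add_distrib, sum_sub_distrib, e₁, e₂, e₃]
  linarith

lemma CondNegDef.posSemidef_map_exp_neg_mul {N : Matrix ι ι ℝ} (hN : N.CondNegDef)
    (hsymm : N.IsSymm) (hdiag : ∀ i, N i i = 0) {t : ℝ} (ht : 0 ≤ t) :
    (N.map fun x => rexp (-t * x)).PosSemidef := by
  rcases isEmpty_or_nonempty ι with hι | ⟨⟨i₀⟩⟩
  · simpa [Subsingleton.elim _ (0 : Matrix ι ι ℝ)] using PosSemidef.zero
  have hψ := ((hN.smul ht).posSemidef_of_basepoint (hsymm.smul t) i₀).map_exp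
  have hfactor : N.map (fun x => rexp (-t * x)) = vecMulVec (fun i => rexp (-t * N i i₀))
      (star fun i => rexp (-t * N i i₀)) ⊙
      (of fun i j => (t • N) i i₀ + (t • N) i₀ j - (t • N) i j - (t • N) i₀ i₀).map rexp := by
    ext i j
    simp only [map_apply, hadamard_apply, vecMulVec_apply, of_apply, smul_apply, smul_eq_mul,
      star_trivial, hdiag, ← exp_add, hsymm.apply i₀ j]
    ring_nf
  rw [hfactor]
  exact (posSemidef_vecMulVec_self_star _).hadamard hψ

lemma CondNegDef.map_rpow {N : Matrix ι ι ℝ} (hN : N.CondNegDef) (hsymm : N.IsSymm)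
    (hdiag : ∀ i, N i i = 0) (hnonneg : ∀ i j, 0 ≤ N i j) {ν : ℝ} (hν0 : 0 < ν) (hν1 : ν ≤ 1) :
    (N.map (· ^ ν)).CondNegDef := by
  rcases hν1.eq_or_lt with rfl | hν1
  · simpa using hN
  intro b hb
  set c := ∫ u in Ioi 0, (1 - rexp (-u)) * u ^ (-1 - ν)
  have hint : ∀ i j, Integrable (fun u => b i * b j * ((1 - rexp (-(u * N i j))) * u ^ (-1 - ν)))
      (volume.restrict (Ioi 0)) := fun i j =>
    (integrableOn_one_sub_exp_neg_mul_mul_rpow hν0 hν1 (hnonneg i j)).const_mul _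
  have hpointwise : ∀ u ∈ Ioi (0 : ℝ),
      ∑ i, ∑ j, b i * b j * ((1 - rexp (-(u * N i j))) * u ^ (-1 - ν)) =
        -(u ^ (-1 - ν) * ∑ i, ∑ j, b i * b j * rexp (-u * N i j)) := fun u _ => by
    have hterm : ∀ i j, b i * b j * ((1 - rexp (-(u * N i j))) * u ^ (-1 - ν)) =
        u ^ (-1 - ν) * (b i * b j) - u ^ (-1 - ν) * (b i * b j * rexp (-u * N i j)) := by
      intro i j
      rw [neg_mul]
      ring
    simp only [hterm, sum_sub_distrib, ← mul_sum]
    simp [hb]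
  have hquad : (b ⬝ᵥ N.map (· ^ ν) *ᵥ b) * c = ∫ u in Ioi 0,
      -(u ^ (-1 - ν) * ∑ i, ∑ j, b i * b j * rexp (-u * N i j)) := by
    rw [← setIntegral_congr_fun measurableSet_Ioi hpointwise,
      integral_finsetSum _ fun i _ => integrable_finsetSum _ fun j _ => hint i j,
      dotProduct_mulVec_self_eq_sum_sum, sum_mul]
    refine sum_congr rfl fun i _ => ?_
    rw [sum_mul, integral_finsetSum _ fun j _ => hint i j]
    refine sum_congr rfl fun j _ => ?_
    rw [integral_const_mul, integral_one_sub_exp_neg_mul_mul_rpow hν0 (hnonneg i j), map_apply,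
      mul_assoc]
  refine nonpos_of_mul_nonpos_left ?_ (integral_one_sub_exp_neg_mul_rpow_pos hν0 hν1)
  rw [hquad]
  refine setIntegral_nonpos measurableSet_Ioi fun u (hu : 0 < u) => neg_nonpos.mpr ?_
  refine mul_nonneg (rpow_nonneg hu.le _) ?_
  have := (hN.posSemidef_map_exp_neg_mul hsymm hdiag hu.le).dotProduct_mulVec_nonneg b
  simpa [dotProduct_mulVec_self_eq_sum_sum] using this

end Matrix

/-- If `d` is a CND pseudometric (symmetric, vanishing on the diagonal,
nonnegative), then the powered exponential kernel `exp(−κ d(s,t)^ν)` is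
positive semidefinite for any `κ > 0` and `ν ∈ (0, 1]`. -/
theorem pexp_kernel_psd {D : Type*} (d : D → D → ℝ)
    (hnonneg : ∀ s t, 0 ≤ d s t)
    (hsymm : ∀ s t, d s t = d t s)
    (hdiag : ∀ s, d s s = 0)
    (hcnd : ∀ (m : ℕ) (s : Fin m → D) (b : Fin m → ℝ), (∑ i, b i = 0) →
      ∑ i, ∑ j, b i * b j * d (s i) (s j) ≤ 0)
    (κ ν : ℝ) (hκ : 0 < κ) (hν0 : 0 < ν) (hν1 : ν ≤ 1) :
    ∀ (m : ℕ) (s : Fin m → D) (a : Fin m → ℝ),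
      0 ≤ ∑ i, ∑ j, a i * a j * Real.exp (-κ * (d (s i) (s j)) ^ ν) := by
  intro m s a
  set N : Matrix (Fin m) (Fin m) ℝ := of fun i j => d (s i) (s j)
  have hN : N.CondNegDef := fun b hb => by
    simpa [dotProduct_mulVec_self_eq_sum_sum, N] using hcnd m s b hb
  have hNsymm : N.IsSymm := by ext i j; exact hsymm _ _
  have hNν := hN.map_rpow hNsymm (fun _ => hdiag _) (fun _ _ => hnonneg _ _) hν0 hν1
  have hkernel := hNν.posSemidef_map_exp_neg_mul (hNsymm.map _)
    (fun _ => by simp [N, hdiag, zero_rpow hν0.ne']) hκ.le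
  simpa [dotProduct_mulVec_self_eq_sum_sum, N] using hkernel.dotProduct_mulVec_nonneg a
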